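/- arXiv:2305.12803 — 5 statements merged into one kernel-verified Lean document; each statement's English description precedes it below -/
import Mathlib

section
/- If M and N are finitary matroids on a common ground set E satisfying Hall(M,N), then for every X ⊆ E the pair (M−X, N/X) satisfies Hall(M−X, N/X). -/
open Set Matroid
open scoped symmDiff

namespace AZ

variable {α : Type*}

/-- The contraction `M / X`, defined (in the standard way) as the dual of the
restriction of the dual to the complement of `X`. -/
def con (M : Matroid α) (X : Set α) : Matroid α := (M✶ ↾ (M.E \ X))✶

/-- The deletion `M − X := M ↾ (E ∖ X)`. -/
def del (M : Matroid α) (X : Set α) : Matroid α := M ↾ (M.E \ X)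

/-- The matroidal Hall condition `Hall(M,N)`: for every `X ⊆ E` such that `M ↾ X` has a
base that is independent in `N.X = N/(E∖X)`, also `N.X` has a base independent in `M ↾ X`. -/
def Hall (M N : Matroid α) : Prop :=
  ∀ X ⊆ N.E,
    (∃ B, (M ↾ X).IsBase B ∧ (con N (N.E \ X)).Indep B) →
    ∃ B, (con N (N.E \ X)).IsBase B ∧ (M ↾ X).Indep B

/-- `(M,N)` is finitely matchable: every finite `F ⊆ E` is `N`-spanned by an
`M`-independent set. -/
def FinitelyMatchable (M N : Matroid α) : Prop :=
  ∀ F ⊆ M.E, F.Finite → ∃ I, M.Indep I ∧ F ⊆ N.closure I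

/-- `G ⊆ E` is `(M,N)`-negligible: for all finite `X ⊆ G` and finite `Y ⊆ E ∖ G` there
is an `M/Y`-independent set that `N`-spans `X`. -/
def Negligible (M N : Matroid α) (G : Set α) : Prop :=
  G ⊆ M.E ∧
    ∀ X ⊆ G, X.Finite → ∀ Y ⊆ M.E \ G, Y.Finite →
      ∃ I, (con M Y).Indep I ∧ X ⊆ N.closure I

/-- A common independent set `I` of `M` and `N` is `(M,N)`-stable if every `J ⊆ E ∖ I`
that is independent in `M/I` and in `N` is also independent in `N/I`. -/
def Stable (M N : Matroid α) (I : Set α) : Prop :=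
  M.Indep I ∧ N.Indep I ∧
    ∀ J ⊆ M.E \ I, (con M I).Indep J → N.Indep J → (con N I).Indep J

/-- A circuit of a matroid: a minimal dependent subset of the ground set. -/
def Circuit (M : Matroid α) (C : Set α) : Prop :=
  C ⊆ M.E ∧ ¬ M.Indep C ∧ ∀ D ⊂ C, M.Indep D

/-- The arc relation of the exchange digraph `D(I)`: for `x ∈ E ∖ I` and `y ∈ I` there is
an arc `x → y` if `x ∈ span_M(I)` and `y` lies in the unique `M`-circuit contained in
`I + x`, and an arc `y → x` if `x ∈ span_N(I)` and `y` lies in the unique `N`-circuit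
contained in `I + x`. -/
def Arc (M N : Matroid α) (I : Set α) (x y : α) : Prop :=
  (x ∈ M.E \ I ∧ y ∈ I ∧ x ∈ M.closure I ∧
    ∃ C, Circuit M C ∧ C ⊆ insert x I ∧ x ∈ C ∧ y ∈ C) ∨
  (x ∈ I ∧ y ∈ M.E \ I ∧ y ∈ N.closure I ∧
    ∃ C, Circuit N C ∧ C ⊆ insert y I ∧ y ∈ C ∧ x ∈ C)

/-- `Reach M N I x` is `E(x,I)`: the set of elements reachable from `x` by a directed
path in `D(I)`. -/
def Reach (M N : Matroid α) (I : Set α) (x : α) : Set α :=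
  {y | Relation.ReflTransGen (Arc M N I) x y}

/-- `P = {f 0, …, f (2n)}` is an `xy`-augmenting path for `I`: it starts at
`x = f 0 ∉ span_N(I)`, ends at `y = f (2n) ∉ span_M(I)`, consecutive elements are joined
by arcs of `D(I)`, and there are no jumping arcs. -/
def IsAugPath (M N : Matroid α) (I P : Set α) (x y : α) : Prop :=
  ∃ (n : ℕ) (f : ℕ → α),
    P = f '' Set.Iic (2 * n) ∧ P ⊆ M.E ∧ Set.InjOn f (Set.Iic (2 * n)) ∧
    f 0 = x ∧ f (2 * n) = y ∧
    x ∉ N.closure I ∧ y ∉ M.closure I ∧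
    (∀ i < 2 * n, Arc M N I (f i) (f (i + 1))) ∧
    (∀ i j, i + 1 < j → j ≤ 2 * n → ¬ Arc M N I (f i) (f j))

/-- One augmentation step: `J = I △ P` for some augmenting path `P` for `I`. -/
def AugStep (M N : Matroid α) (I J : Set α) : Prop :=
  ∃ P x y, IsAugPath M N I P x y ∧ J = I ∆ P

/-- `J ∈ A(I)`: `J` is obtained from `I` by finitely many successive augmentations. -/
def MemA (M N : Matroid α) (I J : Set α) : Prop :=
  Relation.ReflTransGen (AugStep M N) I J

/-- `O = {f 0, …, f (2n+1)}` is a switching cycle for `I`: the arcs of `D(I)` inside `O`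
are exactly the arcs `f i → f (i+1 mod 2n+2)`, forming a chordless directed cycle. -/
def SwitchCycle (M N : Matroid α) (I O : Set α) : Prop :=
  ∃ (n : ℕ) (f : ℕ → α),
    O = f '' Set.Iio (2 * n + 2) ∧ O ⊆ M.E ∧ Set.InjOn f (Set.Iio (2 * n + 2)) ∧
    ∀ i < 2 * n + 2, ∀ j < 2 * n + 2,
      (Arc M N I (f i) (f j) ↔ j = (i + 1) % (2 * n + 2))

/-- The preorder on finite common independent sets: `I ⊴ J` iff
`I ⊆ span_M(J) ∩ span_N(J)`. -/
def Le (M N : Matroid α) (I J : Set α) : Prop :=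
  I ⊆ M.closure J ∩ N.closure J

/-- The equivalence relation: `I ∼ J` iff `I ⊴ J` and `J ⊴ I`. -/
def Sim (M N : Matroid α) (I J : Set α) : Prop :=
  Le M N I J ∧ Le M N J I

/-- A family of finite common independent sets of `M` and `N` that is closed under `∼`
and is `⊴`-directed. -/
def DirFam (M N : Matroid α) (D : Set (Set α)) : Prop :=
  (∀ I ∈ D, I.Finite ∧ M.Indep I ∧ N.Indep I) ∧
  (∀ I ∈ D, ∀ J, J.Finite → M.Indep J → N.Indep J → Sim M N I J → J ∈ D) ∧
  (∀ I ∈ D, ∀ J ∈ D, ∃ K ∈ D, Le M N I K ∧ Le M N J K)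

/-- A maximal directed family of finite common independent sets. -/
def MaxDirFam (M N : Matroid α) (D : Set (Set α)) : Prop :=
  DirFam M N D ∧ ∀ D', DirFam M N D' → D ⊆ D' → D' = D

lemma con_eq_contract (M : Matroid α) (X : Set α) : con M X = M ／ X := rfl

lemma contract_contract_ground_diff {M : Matroid α} {X Y : Set α} (hY : Y ⊆ M.E \ X) :
    M ／ X ／ ((M.E \ X) \ Y) = M ／ (M.E \ Y) := by
  rw [contract_contract, contract_eq_contract_iff]
  ext e
  have := @hY e
  simp only [mem_inter_iff, mem_union, mem_sdiff] at this ⊢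
  tauto

theorem statement1_general (M N : Matroid α) (hE : M.E = N.E)
    (hHall : Hall M N) (X : Set α) : Hall (del M X) (con N X) := by
  intro Y hY
  rw [con_eq_contract, contract_ground] at hY
  have hYM : Y ⊆ M.E \ X := hE ▸ hY
  rw [del, restrict_restrict_eq M hYM, con_eq_contract, con_eq_contract, contract_ground,
    contract_contract_ground_diff hY]
  exact hHall Y (hY.trans sdiff_subset)

/-- If `Hall(M,N)` holds, then `Hall(M−X, N/X)` holds for every `X ⊆ E`. -/
theorem statement1 (M N : Matroid α) [M.Finitary] [N.Finitary] (hE : M.E = N.E)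
    (hHall : Hall M N) (X : Set α) (hX : X ⊆ M.E) : Hall (del M X) (con N X) :=
  statement1_general M N hE hHall X

end AZ
end

section
/- If G ⊆ E is (M,N)-negligible and the pair (M−G, N/G) is finitely matchable, then the pair (M,N) is finitely matchable. -/
/-!
Given a finite `F`, matchability of `(M − G, N / G)` spans `F ∖ G` in `N` by `I ∪ G` with `I`
`M`-independent; since `N` is finitary, finite parts `Y ⊆ I` and `G₀ ⊆ G` already suffice.
Negligibility applied to `X = (F ∩ G) ∪ G₀` and `Y` gives an `M / Y`-independent `J` spanning `X`,
and then `J ∪ Y` is `M`-independent and spans all of `F` in `N`.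
-/

open Set Matroid
open scoped symmDiff

namespace AZ

variable {α : Type*}

lemma FinitelyMatchable.exists_finite_indep_of_delete_contract {M N : Matroid α} [N.Finitary]
    {G F : Set α} (h : FinitelyMatchable (M ＼ G) (N ／ G)) (hF : F ⊆ M.E) (hFfin : F.Finite) :
    ∃ Y ⊆ M.E \ G, Y.Finite ∧ M.Indep Y ∧
      ∃ G₀ ⊆ G, G₀.Finite ∧ F \ G ⊆ N.closure (Y ∪ G₀) := by
  obtain ⟨I, hI, hFI⟩ := h (F \ G) (sdiff_subset_sdiff_left hF) hFfin.sdiff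
  rw [contract_closure_eq] at hFI
  obtain ⟨T, hTIG, hTfin, -, hFT⟩ :=
    N.exists_subset_finite_closure_of_subset_closure hFfin.sdiff (hFI.trans sdiff_subset)
  have hTsplit : T ⊆ (T ∩ I) ∪ (T ∩ G) := by
    rw [← inter_union_distrib_left]; exact subset_inter Subset.rfl hTIG
  exact ⟨T ∩ I, inter_subset_right.trans hI.subset_ground, hTfin.inter_of_left I,
    hI.of_delete.subset inter_subset_right, T ∩ G, inter_subset_right,
    hTfin.inter_of_left G, hFT.trans (N.closure_mono hTsplit)⟩

lemma Negligible.exists_indep_superset_subset_closure {M N : Matroid α} {G X Y : Set α}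
    (hG : Negligible M N G) (hXG : X ⊆ G) (hXfin : X.Finite) (hYG : Y ⊆ M.E \ G)
    (hYfin : Y.Finite) (hY : M.Indep Y) : ∃ K, M.Indep K ∧ Y ⊆ K ∧ X ⊆ N.closure K := by
  obtain ⟨J, hJ, hXJ⟩ := hG.2 X hXG hXfin Y hYG hYfin
  rw [con_eq_contract, hY.contract_indep_iff] at hJ
  exact ⟨J ∪ Y, hJ.2, subset_union_right, hXJ.trans (N.closure_mono subset_union_left)⟩

theorem statement2_general (M N : Matroid α) [N.Finitary]
    (G : Set α) (hG : Negligible M N G)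
    (h : FinitelyMatchable (del M G) (con N G)) : FinitelyMatchable M N := by
  intro F hF hFfin
  obtain ⟨Y, hYG, hYfin, hY, G₀, hG₀, hG₀fin, hFY⟩ :=
    FinitelyMatchable.exists_finite_indep_of_delete_contract h hF hFfin
  set X := (F ∩ G) ∪ G₀
  obtain ⟨K, hK, hYK, hXK⟩ := hG.exists_indep_superset_subset_closure
    (union_subset inter_subset_right hG₀) ((hFfin.inter_of_left G).union hG₀fin) hYG hYfin hY
  refine ⟨K, hK, ?_⟩
  have hFKX : F ⊆ N.closure (K ∪ X) := by
    rw [← inter_union_sdiff F G]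
    exact union_subset ((subset_union_left.trans hXK).trans (N.closure_mono subset_union_left))
      (hFY.trans (N.closure_mono (union_subset_union hYK subset_union_right)))
  calc F ⊆ N.closure (K ∪ X) := hFKX
    _ ⊆ N.closure (K ∪ N.closure K) := N.closure_mono (union_subset_union_right K hXK)
    _ = N.closure K := by rw [closure_union_closure_right_eq, union_self]

/-- If `G` is `(M,N)`-negligible and `(M−G, N/G)` is finitely matchable, then `(M,N)` is
finitely matchable. -/
theorem statement2 (M N : Matroid α) [M.Finitary] [N.Finitary] (hE : M.E = N.E)
    (G : Set α) (hG : Negligible M N G)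
    (h : FinitelyMatchable (del M G) (con N G)) : FinitelyMatchable M N :=
  statement2_general M N G hG h

end AZ
end

section
/- If G ⊆ E is (M,N)-negligible and G' ⊆ E∖G is (M−G, N/G)-negligible, then G ∪ G' is (M,N)-negligible. -/
open Set Matroid
open scoped symmDiff

namespace AZ

variable {α : Type*}

lemma del_eq_delete (M : Matroid α) (X : Set α) : del M X = M ＼ X := rfl

lemma _root_.Matroid.Indep.of_delete_contract {M : Matroid α} {C D I : Set α} (hCD : Disjoint C D)
    (hI : (M ＼ D ／ C).Indep I) : (M ／ C).Indep I := by
  rw [← contract_delete_comm _ hCD] at hI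
  exact hI.of_delete

lemma _root_.Matroid.Indep.union_of_contract_union {M : Matroid α} {C I J : Set α}
    (hJ : (M ／ C).Indep J) (hI : (M ／ (C ∪ J)).Indep I) : (M ／ C).Indep (I ∪ J) := by
  rw [← contract_contract] at hI
  exact (hJ.contract_indep_iff.1 hI).2

lemma subset_closure_union_sdiff {N : Matroid α} {I S G : Set α} (hS : S ⊆ N.E)
    (hSG : S ∩ G ⊆ N.closure I) : S ⊆ N.closure (I ∪ S \ G) := by
  intro s hs
  by_cases hsG : s ∈ G
  · exact N.closure_subset_closure subset_union_left (hSG ⟨hs, hsG⟩)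
  · exact N.subset_closure_of_subset' subset_union_right (sdiff_subset.trans hS) ⟨hs, hsG⟩

lemma Negligible.exists_indep_union {M N : Matroid α} {G X Y T : Set α} (hG : Negligible M N G)
    (hX : X ⊆ G) (hXfin : X.Finite) (hY : Y ⊆ M.E \ G) (hYfin : Y.Finite)
    (hT : (M ／ Y).Indep T) (hTG : Disjoint T G) (hTfin : T.Finite) :
    ∃ I, (M ／ Y).Indep (I ∪ T) ∧ X ⊆ N.closure I := by
  have hYT : Y ∪ T ⊆ M.E \ G :=
    union_subset hY (subset_sdiff.2 ⟨hT.subset_ground.trans sdiff_subset, hTG⟩)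
  obtain ⟨I, hI, hXI⟩ := hG.2 X hX hXfin (Y ∪ T) hYT (hYfin.union hTfin)
  exact ⟨I, hT.union_of_contract_union hI, hXI⟩

theorem statement3_general (M N : Matroid α) [N.Finitary]
    (G G' : Set α) (hG : Negligible M N G)
    (hG' : Negligible (del M G) (con N G) G') : Negligible M N (G ∪ G') := by
  rw [del_eq_delete, con_eq_contract] at hG'
  refine ⟨union_subset hG.1 (hG'.1.trans sdiff_subset), fun X hX hXfin Y hY hYfin => ?_⟩
  have hYG : Y ⊆ M.E \ G := hY.trans (sdiff_subset_sdiff_right subset_union_left)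
  have hYG' : Y ⊆ (M ＼ G).E \ G' := by rwa [delete_ground, Set.sdiff_sdiff]
  obtain ⟨I₂, hI₂, hXI₂⟩ := hG'.2 (X \ G) (sdiff_subset_iff.2 hX) hXfin.sdiff Y hYG' hYfin
  have hXI₂G : X \ G ⊆ N.closure (I₂ ∪ G) := by
    rw [contract_closure_eq] at hXI₂
    exact hXI₂.trans sdiff_subset
  obtain ⟨S, hSsub, hSfin, hSind, hXS⟩ :=
    exists_subset_finite_closure_of_subset_closure hXfin.sdiff hXI₂G
  have hT : (M ／ Y).Indep (S \ G) :=
    (hI₂.subset (sdiff_subset_iff.2 (union_comm I₂ G ▸ hSsub))).of_delete_contract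
      (disjoint_of_subset_left hYG disjoint_sdiff_left)
  obtain ⟨I₁, hI, hI₁⟩ := hG.exists_indep_union
    (union_subset inter_subset_right inter_subset_right)
    ((hXfin.inter_of_left G).union (hSfin.inter_of_left G)) hYG hYfin hT
    disjoint_sdiff_left hSfin.sdiff
  refine ⟨I₁ ∪ S \ G, hI, fun x hx => ?_⟩
  by_cases hxG : x ∈ G
  · exact N.closure_subset_closure subset_union_left (hI₁ (Or.inl ⟨hx, hxG⟩))
  · exact closure_subset_closure_of_subset_closure
      (subset_closure_union_sdiff hSind.subset_ground (subset_union_right.trans hI₁))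
      (hXS ⟨hx, hxG⟩)

/-- If `G` is `(M,N)`-negligible and `G' ⊆ E ∖ G` is `(M−G, N/G)`-negligible, then
`G ∪ G'` is `(M,N)`-negligible. -/
theorem statement3 (M N : Matroid α) [M.Finitary] [N.Finitary] (hE : M.E = N.E)
    (G G' : Set α) (hG : Negligible M N G) (hG'sub : G' ⊆ M.E \ G)
    (hG' : Negligible (del M G) (con N G) G') : Negligible M N (G ∪ G') :=
  statement3_general M N G G' hG hG'

end AZ
end

section
/- The union of any ⊆-chain of (M,N)-stable sets is (M,N)-stable. -/
open Set Matroid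
open scoped symmDiff

namespace AZ

variable {α : Type*}

lemma indep_sUnion_of_directedOn {M : Matroid α} [M.Finitary] {C : Set (Set α)}
    (hC : DirectedOn (· ⊆ ·) C) (hind : ∀ I ∈ C, M.Indep I) : M.Indep (⋃₀ C) := by
  refine indep_of_forall_finite_subset_indep _ fun F hFC hF ↦ ?_
  obtain rfl | hne := C.eq_empty_or_nonempty
  · rw [sUnion_empty, subset_empty_iff] at hFC
    exact hFC ▸ M.empty_indep
  obtain ⟨I, hI, hFI⟩ := hC.exists_mem_subset_of_finite_of_subset_sUnion hne hF hFC
  exact (hind I hI).subset hFI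

lemma indep_union_sUnion_of_isChain {M : Matroid α} [M.Finitary] {C : Set (Set α)} {J : Set α}
    (hC : IsChain (· ⊆ ·) C) (hJ : M.Indep J) (hJC : ∀ I ∈ C, M.Indep (J ∪ I)) :
    M.Indep (J ∪ ⋃₀ C) := by
  -- `J` is added to the family so that it stays nonempty and its union is `J ∪ ⋃₀ C`.
  have hchain : IsChain (· ⊆ ·) (insert J ((J ∪ ·) '' C)) :=
    (IsChain.image_of_map_rel (· ⊆ ·) (· ⊆ ·) (J ∪ ·)
      (fun _ _ ↦ union_subset_union_right J) hC).insert
      (by rintro _ ⟨I, -, rfl⟩ -; exact Or.inl subset_union_left)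
  have hunion : ⋃₀ insert J ((J ∪ ·) '' C) = J ∪ ⋃₀ C := by
    ext x
    simp only [sUnion_insert, sUnion_image, mem_union, mem_iUnion, mem_sUnion, exists_prop]
    grind
  rw [← hunion]
  refine indep_sUnion_of_directedOn hchain.directedOn ?_
  rintro _ (rfl | ⟨I, hI, rfl⟩)
  exacts [hJ, hJC I hI]

lemma Stable.indep_union {M N : Matroid α} {I J : Set α} (hI : Stable M N I)
    (hJI : Disjoint J I) (hJIM : M.Indep (J ∪ I)) (hJN : N.Indep J) : N.Indep (J ∪ I) := by
  obtain ⟨hIM, hIN, hstable⟩ := hI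
  have hJE : J ⊆ M.E \ I := subset_sdiff.2 ⟨subset_union_left.trans hJIM.subset_ground, hJI⟩
  have hJcon : (M ／ I).Indep J := hIM.contract_indep_iff.2 ⟨hJI, hJIM⟩
  exact (hIN.contract_indep_iff.1 (hstable J hJE hJcon hJN)).2

theorem statement6_general (M N : Matroid α) [M.Finitary] [N.Finitary]
    (C : Set (Set α)) (hC : IsChain (· ⊆ ·) C)
    (h : ∀ I ∈ C, Stable M N I) : Stable M N (⋃₀ C) := by
  have hMU := indep_sUnion_of_directedOn hC.directedOn fun I hI ↦ (h I hI).1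
  have hNU := indep_sUnion_of_directedOn hC.directedOn fun I hI ↦ (h I hI).2.1
  refine ⟨hMU, hNU, fun J _ hJM hJN ↦ ?_⟩
  rw [con_eq_contract, hMU.contract_indep_iff] at hJM
  obtain ⟨hJU, hJUM⟩ := hJM
  rw [con_eq_contract, hNU.contract_indep_iff]
  refine ⟨hJU, indep_union_sUnion_of_isChain hC hJN fun I hI ↦ ?_⟩
  exact (h I hI).indep_union (hJU.mono_right (subset_sUnion_of_mem hI))
    (hJUM.subset (union_subset_union_right J (subset_sUnion_of_mem hI))) hJN

/-- The union of a `⊆`-chain of `(M,N)`-stable sets is `(M,N)`-stable. -/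
theorem statement6 (M N : Matroid α) [M.Finitary] [N.Finitary] (hE : M.E = N.E)
    (C : Set (Set α)) (hC : IsChain (· ⊆ ·) C)
    (h : ∀ I ∈ C, Stable M N I) : Stable M N (⋃₀ C) :=
  statement6_general M N C hC h

end AZ
end

section
/- If I is a common independent set of M and N and O ⊆ E induces a chordless directed cycle in the exchange digraph D(I) (the arcs of D(I) with both endpoints in O form a directed cycle passing through every element of O, and D(I) has no other arcs within O), then I △ O is a common independent set of M and N with span_M(I △ O) = span_M(I) and span_N(I △ O) = span_N(I). -/
open Set Matroid
open scoped symmDiff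

namespace AZ

variable {α : Type*}

/-!
Walking once around a chordless cycle `O` of `D(I)`, the elements of `O \ I` and `O ∩ I`
alternate. For `x ∈ O \ I`, chordlessness says that the fundamental `M`-circuit of `x` meets
`O ∩ I` only in the successor of `x`, and the fundamental `N`-circuit of `x` only in its
predecessor. An element exchanged against `x` thus lies in no other relevant circuit, so the
exchanges can be carried out one at a time, each preserving independence and span.
-/

open Function

section Exchange

variable {M : Matroid α} {I C X Y : Set α} {x y : α}

theorem _root_.Matroid.IsCircuit.mem_closure_of_subset_insert (hC : M.IsCircuit C)
    (hCI : C ⊆ insert x I) (hxC : x ∈ C) : x ∈ M.closure I :=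
  M.closure_subset_closure (fun _ hz ↦ (hCI hz.1).resolve_left hz.2)
    (hC.mem_closure_sdiff_singleton_of_mem hxC)

theorem _root_.Matroid.Indep.exchange_of_isCircuit (hI : M.Indep I) (hC : M.IsCircuit C)
    (hCI : C ⊆ insert x I) (hxC : x ∈ C) (hyC : y ∈ C) :
    M.Indep (insert x I \ {y}) ∧ M.closure (insert x I \ {y}) = M.closure I := by
  have hxI : x ∈ M.closure I := hC.mem_closure_of_subset_insert hCI hxC
  have hyxI : y ∈ M.closure (insert x I \ {y}) :=
    M.closure_subset_closure (sdiff_subset_sdiff_left hCI)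
      (hC.mem_closure_sdiff_singleton_of_mem hyC)
  exact ⟨hI.indep_insert_sdiff_of_mem_closure hxI hyxI (hCI hyC),
    hI.closure_insert_sdiff_eq_of_mem_closure hxI hyxI⟩

theorem _root_.Matroid.Indep.exchange_of_bijOn (hI : M.Indep I) (hX : X.Finite)
    (hXI : Disjoint X I) (hYI : Y ⊆ I) {g : α → α} (hg : BijOn g X Y)
    (hC : ∀ x ∈ X, ∃ C, M.IsCircuit C ∧ C ⊆ insert x I ∧ x ∈ C ∧ C ∩ Y = {g x}) :
    M.Indep (I \ Y ∪ X) ∧ M.closure (I \ Y ∪ X) = M.closure I := by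
  induction X, hX using Set.Finite.induction_on generalizing I Y with
  | empty => simp [show Y = ∅ by simpa using hg.image_eq.symm, hI]
  | @insert a X ha _ ih =>
    obtain ⟨Ca, hCa, hCaI, haCa, hCaY⟩ := hC a (mem_insert a X)
    have hgaY : g a ∈ Y := hg.mapsTo (mem_insert a X)
    have haI : a ∉ I := disjoint_left.1 hXI (mem_insert a X)
    obtain ⟨hI', hclI'⟩ :=
      hI.exchange_of_isCircuit hCa hCaI haCa (hCaY.ge (mem_singleton _)).1
    have hg' : BijOn g X (Y \ {g a}) := by
      simpa [insert_sdiff_self_of_notMem ha] using hg.sdiff_singleton (mem_insert a X)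
    have hC' : ∀ x ∈ X, ∃ C, M.IsCircuit C ∧ C ⊆ insert x (insert a I \ {g a}) ∧ x ∈ C ∧
        C ∩ (Y \ {g a}) = {g x} := by
      intro x hx
      obtain ⟨C, hC, hCI, hxC, hCY⟩ := hC x (mem_insert_of_mem a hx)
      have hgx : g x ≠ g a := fun h ↦
        ha (hg.injOn (mem_insert_of_mem a hx) (mem_insert a X) h ▸ hx)
      have hgaC : g a ∉ C := fun h ↦ hgx (hCY.le ⟨h, hgaY⟩ : g a ∈ {g x}).symm
      refine ⟨C, hC, fun z hz ↦ ?_, hxC, ?_⟩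
      · rcases hCI hz with rfl | hzI
        · exact mem_insert z _
        · exact mem_insert_of_mem x ⟨mem_insert_of_mem a hzI, fun h ↦ hgaC (h ▸ hz)⟩
      · rw [← inter_sdiff_assoc, hCY]
        exact sdiff_singleton_eq_self hgx.symm
    have hXI' : Disjoint X (insert a I \ {g a}) :=
      disjoint_insert_right.2 ⟨ha, (disjoint_insert_left.1 hXI).2⟩ |>.mono_right sdiff_subset
    obtain ⟨hind, hcl⟩ :=
      ih hI' hXI' (sdiff_subset_sdiff_left (hYI.trans (subset_insert a I))) hg' hC'
    have hset : (insert a I \ {g a}) \ (Y \ {g a}) ∪ X = I \ Y ∪ insert a X := by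
      ext z
      by_cases hza : z = a
      · subst hza
        have hag : z ≠ g z := fun h ↦ haI (h ▸ hYI hgaY)
        simp [haI, hag, show z ∉ Y from fun h ↦ haI (hYI h)]
      by_cases hzg : z = g a
      · subst hzg; simp [hgaY, hza]
      simp [hza, hzg, or_comm]
    rw [hset] at hind hcl
    exact ⟨hind, hcl.trans hclI'⟩

end Exchange

section ExchangeDigraph

variable {M N : Matroid α} {I C : Set α} {x y : α}

theorem circuit_iff_isCircuit : Circuit M C ↔ M.IsCircuit C := by
  rw [isCircuit_iff_forall_ssubset, Dep, Circuit]
  tauto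

theorem arc_iff (hE : M.E = N.E) : Arc M N I x y ↔
    (x ∉ I ∧ y ∈ I ∧ ∃ C, M.IsCircuit C ∧ C ⊆ insert x I ∧ x ∈ C ∧ y ∈ C) ∨
      (x ∈ I ∧ y ∉ I ∧ ∃ C, N.IsCircuit C ∧ C ⊆ insert y I ∧ y ∈ C ∧ x ∈ C) := by
  simp only [Arc, circuit_iff_isCircuit, mem_sdiff]
  constructor
  · rintro (⟨⟨-, hx⟩, hy, -, hC⟩ | ⟨hx, ⟨-, hy⟩, -, hC⟩)
    exacts [.inl ⟨hx, hy, hC⟩, .inr ⟨hx, hy, hC⟩]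
  · rintro (⟨hx, hy, C, hC, hCI, hxC, hyC⟩ | ⟨hx, hy, C, hC, hCI, hyC, hxC⟩)
    · exact .inl ⟨⟨hC.subset_ground hxC, hx⟩, hy,
        hC.mem_closure_of_subset_insert hCI hxC, C, hC, hCI, hxC, hyC⟩
    · exact .inr ⟨hx, ⟨hE ▸ hC.subset_ground hyC, hy⟩,
        hC.mem_closure_of_subset_insert hCI hyC, C, hC, hCI, hyC, hxC⟩

theorem arc_comm (hE : M.E = N.E) : Arc M N I x y ↔ Arc N M I y x := by
  rw [arc_iff hE, arc_iff hE.symm, or_comm, and_left_comm (a := y ∉ I),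
    and_left_comm (a := y ∈ I)]

theorem Arc.mem_iff_notMem (h : Arc M N I x y) : x ∈ I ↔ y ∉ I := by
  rcases h with ⟨⟨-, hx⟩, hy, -⟩ | ⟨hx, ⟨-, hy⟩, -⟩ <;> simp [hx, hy]

theorem arc_iff_of_notMem (hE : M.E = N.E) (hx : x ∉ I) : Arc M N I x y ↔
    y ∈ I ∧ ∃ C, M.IsCircuit C ∧ C ⊆ insert x I ∧ x ∈ C ∧ y ∈ C := by
  simp [arc_iff hE, hx]

theorem indep_symmDiff_and_closure_eq_of_chordless_cycle {m : ℕ} [NeZero m]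
    (hE : M.E = N.E) (hI : M.Indep I) {f : Fin m → α} (hf : Injective f)
    (hcyc : ∀ i j, Arc M N I (f i) (f j) ↔ j = i + 1) :
    M.Indep (I ∆ range f) ∧ M.closure (I ∆ range f) = M.closure I := by
  set g : α → α := fun z ↦ f (invFun f z + 1)
  have hg : ∀ i, g (f i) = f (i + 1) := fun i ↦ by simp only [g, leftInverse_invFun hf i]
  have harc : ∀ i, Arc M N I (f i) (f (i + 1)) := fun i ↦ (hcyc i _).2 rfl
  have hbij : BijOn g (range f \ I) (range f ∩ I) := by
    refine ⟨?_, ?_, ?_⟩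
    · rintro _ ⟨⟨i, rfl⟩, hi⟩
      rw [hg]
      exact ⟨mem_range_self _, not_not.1 fun h ↦ hi ((harc i).mem_iff_notMem.2 h)⟩
    · rintro _ ⟨⟨i, rfl⟩, -⟩ _ ⟨⟨j, rfl⟩, -⟩ h
      rw [hg, hg] at h
      rw [add_right_cancel (hf h)]
    · rintro _ ⟨⟨j, rfl⟩, hj⟩
      have hpred := harc (j - 1)
      rw [sub_add_cancel] at hpred
      exact ⟨f (j - 1), ⟨mem_range_self _, fun h ↦ hpred.mem_iff_notMem.1 h hj⟩,
        by rw [hg, sub_add_cancel]⟩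
  have hcirc : ∀ x ∈ range f \ I, ∃ C, M.IsCircuit C ∧ C ⊆ insert x I ∧ x ∈ C ∧
      C ∩ (range f ∩ I) = {g x} := by
    rintro _ ⟨⟨i, rfl⟩, hi⟩
    obtain ⟨hi1, C, hC, hCI, hiC, hi1C⟩ := (arc_iff_of_notMem hE hi).1 (harc i)
    refine ⟨C, hC, hCI, hiC, subset_antisymm ?_ ?_⟩
    · rintro _ ⟨hjC, ⟨j, rfl⟩, hj⟩
      rw [hg, (hcyc i j).1 ((arc_iff_of_notMem hE hi).2 ⟨hj, C, hC, hCI, hiC, hjC⟩)]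
      rfl
    · rw [hg, singleton_subset_iff]
      exact ⟨hi1C, mem_range_self _, hi1⟩
  rw [Set.symmDiff_def, ← sdiff_inter_self_eq_sdiff]
  exact hI.exchange_of_bijOn ((finite_range f).subset sdiff_subset) disjoint_sdiff_left
    inter_subset_right hbij hcirc

theorem SwitchCycle.exists_fin {O : Set α} (hO : SwitchCycle M N I O) :
    ∃ (n : ℕ) (f : Fin (2 * n + 2) → α), Injective f ∧ range f = O ∧
      ∀ i j, Arc M N I (f i) (f j) ↔ j = i + 1 := by
  obtain ⟨n, f, rfl, -, hinj, harc⟩ := hO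
  refine ⟨n, fun i ↦ f i, fun i j h ↦ Fin.ext (hinj i.2 j.2 h), ?_, fun i j ↦ ?_⟩
  · ext z
    simp [Fin.exists_iff]
  · rw [harc i i.2 j j.2, Fin.ext_iff, Fin.val_add, Fin.val_one]

end ExchangeDigraph

theorem statement10_general (M N : Matroid α) (hE : M.E = N.E)
    (I O : Set α) (hIM : M.Indep I) (hIN : N.Indep I) (hO : SwitchCycle M N I O) :
    M.Indep (I ∆ O) ∧ N.Indep (I ∆ O) ∧
      M.closure (I ∆ O) = M.closure I ∧ N.closure (I ∆ O) = N.closure I := by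
  obtain ⟨n, f, hf, rfl, hcyc⟩ := hO.exists_fin
  obtain ⟨hM, hMcl⟩ := indep_symmDiff_and_closure_eq_of_chordless_cycle hE hIM hf hcyc
  -- `D(I)` for `(N, M)` is `D(I)` for `(M, N)` with all arcs reversed, so `f ∘ Neg.neg` is a
  -- chordless cycle there.
  have hcyc' : ∀ i j, Arc N M I ((f ∘ Neg.neg) i) ((f ∘ Neg.neg) j) ↔ j = i + 1 := by
    intro i j
    rw [comp_apply, comp_apply, ← arc_comm hE, hcyc]
    grind
  obtain ⟨hN, hNcl⟩ :=
    indep_symmDiff_and_closure_eq_of_chordless_cycle hE.symm hIN (hf.comp neg_injective) hcyc'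
  rw [neg_surjective.range_comp] at hN hNcl
  exact ⟨hM, hN, hMcl, hNcl⟩

/-- If `O` is a switching cycle for a common independent set `I`, then `I △ O` is a
common independent set with the same `M`-span and `N`-span as `I`. -/
theorem statement10 (M N : Matroid α) [M.Finitary] [N.Finitary] (hE : M.E = N.E)
    (I O : Set α) (hIM : M.Indep I) (hIN : N.Indep I) (hO : SwitchCycle M N I O) :
    M.Indep (I ∆ O) ∧ N.Indep (I ∆ O) ∧
      M.closure (I ∆ O) = M.closure I ∧ N.closure (I ∆ O) = N.closure I :=
  statement10_general M N hE I O hIM hIN hO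

end AZ
end
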